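/- arXiv:1607.00350 — 6 statements merged into one kernel-verified Lean document; each statement's English description precedes it below -/
import Mathlib

section
/- The maximal operator S_max f = -f''|_{x≠0} + f_r(0) q₁ − f'_r(0) q₂ on W²₂(ℝ\{0}) satisfies the Green identity (S_max f, g) − (f, S_max g) = (Γ₁f)·Γ₀g − (Γ₀f)·Γ₁g for all f, g in the domain, where Γ₀f = (f_r(0), −f'_r(0))ᵗ and Γ₁f = (f'_s(0) − (q₁, f), f_s(0) − (q₂, f))ᵗ. -/
open MeasureTheory Filter Set Complex

/-- An element of `W²₂(ℝ \ {0})`: a function together with its first and second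
derivatives away from `0`, square-integrability of `f` and `f''`, and one-sided
boundary values `f(0±)`, `f'(0±)` at the origin. -/
structure W22 where
  f : ℝ → ℂ
  d1 : ℝ → ℂ
  d2 : ℝ → ℂ
  hd1 : ∀ x : ℝ, x ≠ 0 → HasDerivAt f (d1 x) x
  hd2 : ∀ x : ℝ, x ≠ 0 → HasDerivAt d1 (d2 x) x
  l2f : MemLp f 2 (volume : Measure ℝ)
  l2d1 : MemLp d1 2 (volume : Measure ℝ)
  l2d2 : MemLp d2 2 (volume : Measure ℝ)
  fp : ℂ
  fm : ℂ
  dp : ℂ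
  dm : ℂ
  hfp : Tendsto f (nhdsWithin 0 (Set.Ioi 0)) (nhds fp)
  hfm : Tendsto f (nhdsWithin 0 (Set.Iio 0)) (nhds fm)
  hdp : Tendsto d1 (nhdsWithin 0 (Set.Ioi 0)) (nhds dp)
  hdm : Tendsto d1 (nhdsWithin 0 (Set.Iio 0)) (nhds dm)

/-- Mean value `f_r(0)`. -/
noncomputable def W22.fr (u : W22) : ℂ := (u.fp + u.fm) / 2
/-- Jump `f_s(0)`. -/
def W22.fs (u : W22) : ℂ := u.fp - u.fm
/-- Mean value `f'_r(0)`. -/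
noncomputable def W22.dr (u : W22) : ℂ := (u.dp + u.dm) / 2
/-- Jump `f'_s(0)`. -/
def W22.ds (u : W22) : ℂ := u.dp - u.dm

/-- The `L²` inner product `(g, f) = ∫ g* f`, linear in the second argument. -/
noncomputable def ip (g f : ℝ → ℂ) : ℂ := ∫ x : ℝ, (starRingEnd ℂ) (g x) * f x

/-- Action of the maximal operator `S_max f = -f''|_{x≠0} + f_r(0) q₁ - f'_r(0) q₂`. -/
noncomputable def Smax (q₁ q₂ : ℝ → ℂ) (u : W22) : ℝ → ℂ :=
  fun x => -(u.d2 x) + u.fr * q₁ x - u.dr * q₂ x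

/-- Boundary map `Γ₀ f = (f_r(0), -f'_r(0))`. -/
noncomputable def Γ0 (u : W22) : ℂ × ℂ := (u.fr, -u.dr)

/-- Boundary map `Γ₁ f = (f'_s(0) - (q₁, f), f_s(0) - (q₂, f))`. -/
noncomputable def Γ1 (q₁ q₂ : ℝ → ℂ) (u : W22) : ℂ × ℂ :=
  (u.ds - ip q₁ u.f, u.fs - ip q₂ u.f)

/-!
The Wronskian `W = ū' v - ū v'` of `u, v ∈ W²₂(ℝ \ {0})` has derivative `ū'' v - ū v''` off the
origin, and both are integrable (products of `L²` functions), so `W → 0` at `±∞` and integrating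
over the two half-lines gives `∫ (ū'' v - ū v'') = W(0-) - W(0+)`. The rank-one terms of `S_max`
produce exactly the inner products `(q_i, f)` occurring in `Γ₁`, and what remains is the algebraic
identity expressing `W(0-) - W(0+)` through the mean values and jumps of `u` and `v` at `0`.
-/

open scoped Topology ComplexConjugate

section ImproperFTC

variable {E : Type*} [NormedAddCommGroup E] [NormedSpace ℝ E] [CompleteSpace E]
  {f f' : ℝ → E} {a : ℝ} {l : E}

theorem integral_Ioi_of_hasDerivAt_of_integrableOn_of_tendsto_nhdsGT
    (hderiv : ∀ x ∈ Ioi a, HasDerivAt f (f' x) x) (hf : IntegrableOn f (Ioi a))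
    (hf' : IntegrableOn f' (Ioi a)) (hlim : Tendsto f (𝓝[>] a) (𝓝 l)) :
    ∫ x in Ioi a, f' x = -l := by
  classical
  have hcont : ContinuousWithinAt (Function.update f a l) (Ici a) a := by
    rwa [continuousWithinAt_update_same, Ici_sdiff_left]
  have hderiv' : ∀ x ∈ Ioi a, HasDerivAt (Function.update f a l) (f' x) x := fun x hx =>
    (hderiv x hx).congr_of_eventuallyEq <| by
      filter_upwards [eventually_ne_nhds (ne_of_gt hx)] with y hy using Function.update_of_ne hy ..
  have hinf : Tendsto (Function.update f a l) atTop (𝓝 0) :=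
    (tendsto_zero_of_hasDerivAt_of_integrableOn_Ioi hderiv hf' hf).congr' <| by
      filter_upwards [eventually_ne_atTop a] with y hy using (Function.update_of_ne hy ..).symm
  rw [integral_Ioi_of_hasDerivAt_of_tendsto hcont hderiv' hf' hinf, Function.update_self, zero_sub]

theorem integral_Iic_of_hasDerivAt_of_integrableOn_of_tendsto_nhdsLT
    (hderiv : ∀ x ∈ Iio a, HasDerivAt f (f' x) x) (hf : IntegrableOn f (Iic a))
    (hf' : IntegrableOn f' (Iic a)) (hlim : Tendsto f (𝓝[<] a) (𝓝 l)) :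
    ∫ x in Iic a, f' x = l := by
  classical
  have hcont : ContinuousWithinAt (Function.update f a l) (Iic a) a := by
    rwa [continuousWithinAt_update_same, Iic_sdiff_right]
  have hderiv' : ∀ x ∈ Iio a, HasDerivAt (Function.update f a l) (f' x) x := fun x hx =>
    (hderiv x hx).congr_of_eventuallyEq <| by
      filter_upwards [eventually_ne_nhds (ne_of_lt hx)] with y hy using Function.update_of_ne hy ..
  have hinf : Tendsto (Function.update f a l) atBot (𝓝 0) := by
    have hsub : Iic (a - 1) ⊆ Iic a := Iic_subset_Iic.2 (sub_one_lt a).le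
    refine (tendsto_zero_of_hasDerivAt_of_integrableOn_Iic
      (fun x hx => hderiv x (lt_of_le_of_lt hx (sub_one_lt a))) (hf'.mono_set hsub)
      (hf.mono_set hsub)).congr' ?_
    filter_upwards [eventually_ne_atBot a] with y hy using (Function.update_of_ne hy ..).symm
  rw [integral_Iic_of_hasDerivAt_of_tendsto hcont hderiv' hf' hinf, Function.update_self, sub_zero]

theorem integral_eq_sub_of_hasDerivAt_of_ne_of_integrable
    (hderiv : ∀ x ≠ a, HasDerivAt f (f' x) x) (hf : Integrable f) (hf' : Integrable f')
    {l₁ l₂ : E} (hleft : Tendsto f (𝓝[<] a) (𝓝 l₁)) (hright : Tendsto f (𝓝[>] a) (𝓝 l₂)) :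
    ∫ x, f' x = l₁ - l₂ := by
  rw [← intervalIntegral.integral_Iic_add_Ioi hf'.integrableOn hf'.integrableOn,
    integral_Iic_of_hasDerivAt_of_integrableOn_of_tendsto_nhdsLT
      (fun x hx => hderiv x (ne_of_lt hx)) hf.integrableOn hf'.integrableOn hleft,
    integral_Ioi_of_hasDerivAt_of_integrableOn_of_tendsto_nhdsGT
      (fun x hx => hderiv x (ne_of_gt hx)) hf.integrableOn hf'.integrableOn hright,
    sub_eq_add_neg]

end ImproperFTC

theorem integrable_conj_mul_of_memLp_two {α : Type*} [MeasurableSpace α] {μ : Measure α}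
    {f g : α → ℂ} (hf : MemLp f 2 μ) (hg : MemLp g 2 μ) :
    Integrable (fun x => conj (f x) * g x) μ :=
  hf.star.integrable_mul hg

theorem ip_eq_conj_ip (f g : ℝ → ℂ) : ip f g = conj (ip g f) := by
  rw [ip, ip, ← integral_conj]
  simp only [map_mul, conj_conj, mul_comm]

namespace W22

def wronskian (u v : W22) (x : ℝ) : ℂ := conj (u.d1 x) * v.f x - conj (u.f x) * v.d1 x

variable (u v : W22)

theorem hasDerivAt_wronskian {x : ℝ} (hx : x ≠ 0) :
    HasDerivAt (wronskian u v) (conj (u.d2 x) * v.f x - conj (u.f x) * v.d2 x) x := by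
  have h := ((u.hd2 x hx).star.mul (v.hd1 x hx)).sub ((u.hd1 x hx).star.mul (v.hd2 x hx))
  refine h.congr_deriv ?_
  simp only [starRingEnd_apply]
  ring

theorem ip_d2_f_sub_ip_f_d2 :
    ip u.d2 v.f - ip u.f v.d2
      = (conj u.dm * v.fm - conj u.fm * v.dm) - (conj u.dp * v.fp - conj u.fp * v.dp) := by
  have hd2f := integrable_conj_mul_of_memLp_two u.l2d2 v.l2f
  have hfd2 := integrable_conj_mul_of_memLp_two u.l2f v.l2d2
  rw [ip, ip, ← integral_sub hd2f hfd2]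
  exact integral_eq_sub_of_hasDerivAt_of_ne_of_integrable
    (fun _ hx => hasDerivAt_wronskian u v hx)
    ((integrable_conj_mul_of_memLp_two u.l2d1 v.l2f).sub
      (integrable_conj_mul_of_memLp_two u.l2f v.l2d1))
    (hd2f.sub hfd2)
    ((u.hdm.star.mul v.hfm).sub (u.hfm.star.mul v.hdm))
    ((u.hdp.star.mul v.hfp).sub (u.hfp.star.mul v.hdp))

end W22

section Smax

variable {q₁ q₂ g : ℝ → ℂ}

theorem ip_Smax_left (hq₁ : MemLp q₁ 2 volume) (hq₂ : MemLp q₂ 2 volume) (u : W22)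
    (hg : MemLp g 2 volume) :
    ip (Smax q₁ q₂ u) g = -ip u.d2 g + conj u.fr * ip q₁ g - conj u.dr * ip q₂ g := by
  have hd2 := integrable_conj_mul_of_memLp_two u.l2d2 hg
  have h₁ := (integrable_conj_mul_of_memLp_two hq₁ hg).const_mul (conj u.fr)
  have h₂ := (integrable_conj_mul_of_memLp_two hq₂ hg).const_mul (conj u.dr)
  simp only [ip, Smax, map_sub, map_add, map_neg, map_mul]
  rw [← integral_neg, ← integral_const_mul, ← integral_const_mul, ← integral_add hd2.fun_neg h₁,
    ← integral_sub (hd2.fun_neg.fun_add h₁) h₂]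
  congr 1 with x
  ring

theorem ip_Smax_right (hq₁ : MemLp q₁ 2 volume) (hq₂ : MemLp q₂ 2 volume) (u : W22)
    (hg : MemLp g 2 volume) :
    ip g (Smax q₁ q₂ u) = -ip g u.d2 + u.fr * ip g q₁ - u.dr * ip g q₂ := by
  have hd2 := integrable_conj_mul_of_memLp_two hg u.l2d2
  have h₁ := (integrable_conj_mul_of_memLp_two hg hq₁).const_mul u.fr
  have h₂ := (integrable_conj_mul_of_memLp_two hg hq₂).const_mul u.dr
  simp only [ip, Smax]
  rw [← integral_neg, ← integral_const_mul, ← integral_const_mul, ← integral_add hd2.fun_neg h₁,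
    ← integral_sub (hd2.fun_neg.fun_add h₁) h₂]
  congr 1 with x
  ring

end Smax

theorem stmt4_general (q₁ q₂ : ℝ → ℂ)
    (hq₁ : MemLp q₁ 2 (volume : Measure ℝ)) (hq₂ : MemLp q₂ 2 (volume : Measure ℝ))
    (u v : W22) :
    ip (Smax q₁ q₂ u) v.f - ip u.f (Smax q₁ q₂ v)
      = ((starRingEnd ℂ) (Γ1 q₁ q₂ u).1 * (Γ0 v).1
          + (starRingEnd ℂ) (Γ1 q₁ q₂ u).2 * (Γ0 v).2)
        - ((starRingEnd ℂ) (Γ0 u).1 * (Γ1 q₁ q₂ v).1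
          + (starRingEnd ℂ) (Γ0 u).2 * (Γ1 q₁ q₂ v).2) := by
  rw [ip_Smax_left hq₁ hq₂ u v.l2f, ip_Smax_right hq₁ hq₂ v u.l2f, ip_eq_conj_ip u.f q₁,
    ip_eq_conj_ip u.f q₂]
  simp only [Γ0, Γ1, W22.fr, W22.dr, W22.fs, W22.ds, map_sub, map_add, map_div₀, map_neg,
    map_ofNat]
  linear_combination (-1 : ℂ) * W22.ip_d2_f_sub_ip_f_d2 u v

/-- the Green identity
`(S_max f, g) - (f, S_max g) = (Γ₁ f)·(Γ₀ g) - (Γ₀ f)·(Γ₁ g)` for all `f, g ∈ W²₂(ℝ\{0})`,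
where `x·y = x₁* y₁ + x₂* y₂` is the inner product of `ℂ²`. -/
theorem stmt4 (q₁ q₂ : ℝ → ℂ)
    (hq₁ : MemLp q₁ 2 (volume : Measure ℝ)) (hq₂ : MemLp q₂ 2 (volume : Measure ℝ))
    (hq₁pc : ∃ s : Finset ℝ, ∀ x ∉ s, ContinuousAt q₁ x)
    (hq₂pc : ∃ s : Finset ℝ, ∀ x ∉ s, ContinuousAt q₂ x)
    (u v : W22) :
    ip (Smax q₁ q₂ u) v.f - ip u.f (Smax q₁ q₂ v)
      = ((starRingEnd ℂ) (Γ1 q₁ q₂ u).1 * (Γ0 v).1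
          + (starRingEnd ℂ) (Γ1 q₁ q₂ u).2 * (Γ0 v).2)
        - ((starRingEnd ℂ) (Γ0 u).1 * (Γ1 q₁ q₂ v).1
          + (starRingEnd ℂ) (Γ0 u).2 * (Γ1 q₁ q₂ v).2) :=
  stmt4_general q₁ q₂ hq₁ hq₂ u v
end

section
/- For any vectors h₀, h₁ ∈ ℂ², there exists f ∈ W²₂(ℝ\{0}) such that Γ₀f = h₀ and Γ₁f = h₁, where Γ₀f = (f_r(0), −f'_r(0))ᵗ and Γ₁f = (f'_s(0) − (q₁,f), f_s(0) − (q₂,f))ᵗ; i.e., the map (Γ₀,Γ₁) : W²₂(ℝ\{0}) → ℂ² ⊕ ℂ² is surjective. -/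
open MeasureTheory Filter Set Complex

/-! The boundary values are prescribed by gluing `(a + b x) χ(x)` on each half-line, where `χ`
is a smooth bump equal to `1` near `0`. Writing `f` as its mean part plus `sgn x / 2` times its
jump part, the remaining conditions become a `2 × 2` linear system for the jumps whose
coefficients are the inner products of `q₁, q₂` with the jump part; as the support of `χ`
shrinks these tend to `0` by dominated convergence, so for a narrow bump the system is a small
perturbation of the identity and can be solved. -/

open Topology ComplexConjugate Metric

theorem exists_mul_add_mul_eq_of_det_ne_zero {K : Type*} [Field K] {a b c d : K}
    (h : a * d - b * c ≠ 0) (w₁ w₂ : K) :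
    ∃ x y, a * x + b * y = w₁ ∧ c * x + d * y = w₂ :=
  ⟨(d * w₁ - b * w₂) / (a * d - b * c), (a * w₂ - c * w₁) / (a * d - b * c),
    by rw [mul_div_assoc', mul_div_assoc', ← add_div, div_eq_iff h]; ring,
    by rw [mul_div_assoc', mul_div_assoc', ← add_div, div_eq_iff h]; ring⟩

theorem exists_sub_mul_add_mul_eq_of_tendsto_zero {ι 𝕜 : Type*} [NormedField 𝕜] {l : Filter ι}
    [l.NeBot] {A B C D : ι → 𝕜} (hA : Tendsto A l (𝓝 0)) (hB : Tendsto B l (𝓝 0))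
    (hC : Tendsto C l (𝓝 0)) (hD : Tendsto D l (𝓝 0)) (w₁ w₂ : ι → 𝕜) :
    ∃ i x y, x - (A i * x + B i * y) = w₁ i ∧ y - (C i * x + D i * y) = w₂ i := by
  have hdet : Tendsto (fun i => (1 - A i) * (1 - D i) - -B i * -C i) l (𝓝 1) := by
    have h1 : Tendsto (fun _ : ι => (1 : 𝕜)) l (𝓝 1) := tendsto_const_nhds
    simpa using ((h1.sub hA).mul (h1.sub hD)).sub (hB.neg.mul hC.neg)
  obtain ⟨i, hi⟩ := (hdet.eventually_ne one_ne_zero).exists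
  obtain ⟨x, y, hx, hy⟩ := exists_mul_add_mul_eq_of_det_ne_zero hi (w₁ i) (w₂ i)
  exact ⟨i, x, y, by linear_combination hx, by linear_combination hy⟩

section Gluing

variable {E : Type*} [NormedAddCommGroup E] {F G : ℝ → E}

theorem hasDerivAt_ite_pos [NormedSpace ℝ E] {F' G' : E} {x : ℝ} (hx : x ≠ 0)
    (hF : HasDerivAt F F' x) (hG : HasDerivAt G G' x) :
    HasDerivAt (fun y => if 0 < y then F y else G y) (if 0 < x then F' else G') x := by
  rcases hx.lt_or_gt with hx | hx
  · rw [if_neg hx.not_gt]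
    exact hG.congr_of_eventuallyEq <|
      (eventually_lt_nhds hx).mono fun y hy => if_neg hy.not_gt
  · rw [if_pos hx]
    exact hF.congr_of_eventuallyEq <| (eventually_gt_nhds hx).mono fun y hy => if_pos hy

theorem tendsto_ite_pos_nhdsGT (hF : ContinuousAt F 0) :
    Tendsto (fun y => if 0 < y then F y else G y) (𝓝[>] 0) (𝓝 (F 0)) :=
  (hF.tendsto.mono_left nhdsWithin_le_nhds).congr'
    (eventually_nhdsWithin_of_forall fun _ hy => (if_pos hy).symm)

theorem tendsto_ite_pos_nhdsLT (hG : ContinuousAt G 0) :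
    Tendsto (fun y => if 0 < y then F y else G y) (𝓝[<] 0) (𝓝 (G 0)) :=
  (hG.tendsto.mono_left nhdsWithin_le_nhds).congr'
    (eventually_nhdsWithin_of_forall fun _ hy => (if_neg (lt_asymm hy)).symm)

theorem MeasureTheory.MemLp.ite_pos {p : ENNReal} {μ : Measure ℝ} (hF : MemLp F p μ)
    (hG : MemLp G p μ) :
    MemLp (fun y => if 0 < y then F y else G y) p μ :=
  MemLp.piecewise (s := Ioi 0) measurableSet_Ioi (hF.restrict _) (hG.restrict _)

theorem HasCompactSupport.memLp_deriv_deriv [NormedSpace ℝ E] {p : ENNReal}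
    (hF : ContDiff ℝ 2 F) (hFc : HasCompactSupport F) :
    MemLp F p volume ∧ MemLp (deriv F) p volume ∧ MemLp (deriv (deriv F)) p volume :=
  ⟨hF.continuous.memLp_of_hasCompactSupport hFc,
    (hF.continuous_deriv (by norm_num)).memLp_of_hasCompactSupport hFc.deriv,
    ((hF.deriv' (n := 1)).continuous_deriv le_rfl).memLp_of_hasCompactSupport hFc.deriv.deriv⟩

end Gluing

namespace W22

noncomputable def ofPieces (F G : ℝ → ℂ) (hF : ContDiff ℝ 2 F) (hG : ContDiff ℝ 2 G)
    (hFc : HasCompactSupport F) (hGc : HasCompactSupport G) : W22 where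
  f x := if 0 < x then F x else G x
  d1 x := if 0 < x then deriv F x else deriv G x
  d2 x := if 0 < x then deriv (deriv F) x else deriv (deriv G) x
  hd1 x hx := hasDerivAt_ite_pos hx (hF.differentiable (by norm_num) x).hasDerivAt
    (hG.differentiable (by norm_num) x).hasDerivAt
  hd2 x hx := hasDerivAt_ite_pos hx
    ((hF.deriv' (n := 1)).differentiable one_ne_zero x).hasDerivAt
    ((hG.deriv' (n := 1)).differentiable one_ne_zero x).hasDerivAt
  l2f := MemLp.ite_pos (hFc.memLp_deriv_deriv hF).1 (hGc.memLp_deriv_deriv hG).1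
  l2d1 := MemLp.ite_pos (hFc.memLp_deriv_deriv hF).2.1 (hGc.memLp_deriv_deriv hG).2.1
  l2d2 := MemLp.ite_pos (hFc.memLp_deriv_deriv hF).2.2 (hGc.memLp_deriv_deriv hG).2.2
  fp := F 0
  fm := G 0
  dp := deriv F 0
  dm := deriv G 0
  hfp := tendsto_ite_pos_nhdsGT hF.continuous.continuousAt
  hfm := tendsto_ite_pos_nhdsLT hG.continuous.continuousAt
  hdp := tendsto_ite_pos_nhdsGT (hF.continuous_deriv (by norm_num)).continuousAt
  hdm := tendsto_ite_pos_nhdsLT (hG.continuous_deriv (by norm_num)).continuousAt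

end W22

noncomputable def bump (n : ℕ) : ContDiffBump (0 : ℝ) where
  rIn := 1 / (2 * (n + 1))
  rOut := 1 / (n + 1)
  rIn_pos := by positivity
  rIn_lt_rOut := one_div_lt_one_div_of_lt (by positivity) (by linarith)

theorem bump_eq_zero {n : ℕ} {x : ℝ} (hx : 1 / (n + 1 : ℝ) ≤ |x|) : bump n x = 0 :=
  (bump n).zero_of_le_dist (by simpa [bump] using hx)

theorem eventually_bump_eq_one (n : ℕ) : ∀ᶠ x in 𝓝 (0 : ℝ), bump n x = 1 :=
  Filter.eventually_of_mem (closedBall_mem_nhds 0 (bump n).rIn_pos)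
    fun _ hx => (bump n).one_of_mem_closedBall hx

theorem norm_bump_le_one (n : ℕ) (x : ℝ) : ‖(bump n x : ℂ)‖ ≤ 1 := by
  rw [norm_real, Real.norm_of_nonneg (bump n).nonneg]
  exact (bump n).le_one

noncomputable def bumpAffine (n : ℕ) (a b : ℂ) (x : ℝ) : ℂ := (a + b * x) * bump n x

section BumpAffine

variable {n : ℕ} {a b : ℂ}

theorem contDiff_bumpAffine : ContDiff ℝ 2 (bumpAffine n a b) := by
  have hx : ContDiff ℝ 2 (fun x : ℝ => (x : ℂ)) := ofRealCLM.contDiff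
  have hχ : ContDiff ℝ 2 (fun x : ℝ => (bump n x : ℂ)) :=
    ofRealCLM.contDiff.comp (bump n).contDiff
  unfold bumpAffine
  fun_prop

theorem hasCompactSupport_bumpAffine : HasCompactSupport (bumpAffine n a b) :=
  ((bump n).hasCompactSupport.comp_left ofReal_zero).mul_left

theorem bumpAffine_zero : bumpAffine n a b 0 = a := by
  simp [bumpAffine, (eventually_bump_eq_one n).self_of_nhds]

theorem deriv_bumpAffine_zero : deriv (bumpAffine n a b) 0 = b := by
  have hloc : bumpAffine n a b =ᶠ[𝓝 0] fun x => a + b * x :=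
    (eventually_bump_eq_one n).mono fun x hx => by simp [bumpAffine, hx]
  rw [hloc.deriv_eq]
  simpa using (((hasDerivAt_id (0 : ℝ)).ofReal_comp.const_mul b).const_add a).deriv

end BumpAffine

noncomputable def halfSign (x : ℝ) : ℂ := if 0 < x then 1 / 2 else -(1 / 2)

theorem aestronglyMeasurable_halfSign : AEStronglyMeasurable halfSign volume :=
  (Measurable.ite measurableSet_Ioi measurable_const measurable_const).aestronglyMeasurable

theorem norm_halfSign (x : ℝ) : ‖halfSign x‖ = 1 / 2 := by
  unfold halfSign; split_ifs <;> norm_num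

noncomputable def cutoff (n : ℕ) (g : ℝ → ℂ) (x : ℝ) : ℂ := g x * bump n x

namespace W22

noncomputable def spline (n : ℕ) (r₁ r₂ s₁ s₂ : ℂ) : W22 :=
  ofPieces (bumpAffine n (r₁ + s₁ / 2) (r₂ + s₂ / 2)) (bumpAffine n (r₁ - s₁ / 2) (r₂ - s₂ / 2))
    contDiff_bumpAffine contDiff_bumpAffine
    hasCompactSupport_bumpAffine hasCompactSupport_bumpAffine

variable {n : ℕ} {r₁ r₂ s₁ s₂ : ℂ}

theorem spline_fr : (spline n r₁ r₂ s₁ s₂).fr = r₁ := by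
  simp only [fr, spline, ofPieces, bumpAffine_zero]; ring

theorem spline_fs : (spline n r₁ r₂ s₁ s₂).fs = s₁ := by
  simp only [fs, spline, ofPieces, bumpAffine_zero]; ring

theorem spline_dr : (spline n r₁ r₂ s₁ s₂).dr = r₂ := by
  simp only [dr, spline, ofPieces, deriv_bumpAffine_zero]; ring

theorem spline_ds : (spline n r₁ r₂ s₁ s₂).ds = s₂ := by
  simp only [ds, spline, ofPieces, deriv_bumpAffine_zero]; ring

theorem spline_f : (spline n r₁ r₂ s₁ s₂).f = fun x => r₁ * cutoff n 1 x + r₂ * cutoff n (↑) x +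
    s₁ * cutoff n halfSign x + s₂ * cutoff n (fun y => halfSign y * y) x := by
  funext x
  simp only [spline, ofPieces, bumpAffine, cutoff, halfSign, Pi.one_apply]
  split_ifs <;> ring

end W22

section Cutoff

variable {q g : ℝ → ℂ} {C : ℝ}

theorem aestronglyMeasurable_conj_mul_cutoff (hq : AEStronglyMeasurable q volume)
    (hg : AEStronglyMeasurable g volume) (n : ℕ) :
    AEStronglyMeasurable (fun x => conj (q x) * cutoff n g x) volume :=
  (continuous_conj.comp_aestronglyMeasurable hq).mul
    (hg.mul (continuous_ofReal.comp (bump n).continuous).aestronglyMeasurable)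

theorem integrable_indicator_closedBall_mul_norm (hq : MemLp q 2 volume) (C : ℝ) :
    Integrable ((closedBall (0 : ℝ) 1).indicator fun y => C * ‖q y‖) :=
  IntegrableOn.integrable_indicator (((hq.locallyIntegrable (by norm_num)).integrableOn_isCompact
    (isCompact_closedBall 0 1)).norm.const_mul C) measurableSet_closedBall

theorem norm_conj_mul_cutoff_le (hg : ∀ x ∈ closedBall (0 : ℝ) 1, ‖g x‖ ≤ C) (n : ℕ)
    (x : ℝ) :
    ‖conj (q x) * cutoff n g x‖ ≤ (closedBall (0 : ℝ) 1).indicator (fun y => C * ‖q y‖) x := by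
  by_cases hx : x ∈ closedBall (0 : ℝ) 1
  · have hgχ : ‖g x‖ * ‖(bump n x : ℂ)‖ ≤ C * 1 :=
      mul_le_mul (hg x hx) (norm_bump_le_one n x) (norm_nonneg _) ((norm_nonneg _).trans (hg x hx))
    rw [indicator_of_mem hx, norm_mul, norm_conj, cutoff, norm_mul, mul_comm C]
    exact mul_le_mul_of_nonneg_left (by simpa using hgχ) (norm_nonneg _)
  · have hx1 : 1 < |x| := by simpa using hx
    have hn : 1 / (n + 1 : ℝ) ≤ 1 := (div_le_one (by positivity)).mpr (by simp)
    simp [indicator_of_notMem hx, cutoff, bump_eq_zero (hn.trans hx1.le)]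

theorem integrable_conj_mul_cutoff (hq : MemLp q 2 volume) (hgm : AEStronglyMeasurable g volume)
    (hg : ∀ x ∈ closedBall (0 : ℝ) 1, ‖g x‖ ≤ C) (n : ℕ) :
    Integrable (fun x => conj (q x) * cutoff n g x) :=
  (integrable_indicator_closedBall_mul_norm hq C).mono'
    (aestronglyMeasurable_conj_mul_cutoff hq.1 hgm n)
    (ae_of_all _ (norm_conj_mul_cutoff_le hg n))

theorem tendsto_ip_cutoff (hq : MemLp q 2 volume) (hgm : AEStronglyMeasurable g volume)
    (hg : ∀ x ∈ closedBall (0 : ℝ) 1, ‖g x‖ ≤ C) :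
    Tendsto (fun n => ip q (cutoff n g)) atTop (𝓝 0) := by
  have hlim : ∀ᵐ x, Tendsto (fun n => conj (q x) * cutoff n g x) atTop (𝓝 0) := by
    filter_upwards [Measure.ae_ne volume 0] with x hx
    obtain ⟨N, hN⟩ := exists_nat_one_div_lt (abs_pos.mpr hx)
    refine tendsto_const_nhds.congr' (eventually_atTop.mpr ⟨N, fun n hn => ?_⟩)
    simp [cutoff, bump_eq_zero ((Nat.one_div_le_one_div hn).trans hN.le)]
  simpa [ip] using tendsto_integral_of_dominated_convergence _
    (aestronglyMeasurable_conj_mul_cutoff hq.1 hgm) (integrable_indicator_closedBall_mul_norm hq C)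
    (fun n => ae_of_all _ (norm_conj_mul_cutoff_le hg n)) hlim

end Cutoff

theorem norm_halfSign_mul_le_one {x : ℝ} (hx : x ∈ closedBall (0 : ℝ) 1) :
    ‖halfSign x * x‖ ≤ 1 := by
  have hx1 : |x| ≤ 1 := by simpa using hx
  rw [norm_mul, norm_halfSign, norm_real, Real.norm_eq_abs]
  linarith

theorem tendsto_ip_cutoff_halfSign {q : ℝ → ℂ} (hq : MemLp q 2 volume) :
    Tendsto (fun n => ip q (cutoff n halfSign)) atTop (𝓝 0) :=
  tendsto_ip_cutoff hq aestronglyMeasurable_halfSign fun x _ => (norm_halfSign x).le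

theorem tendsto_ip_cutoff_halfSign_mul {q : ℝ → ℂ} (hq : MemLp q 2 volume) :
    Tendsto (fun n => ip q (cutoff n fun x => halfSign x * x)) atTop (𝓝 0) :=
  tendsto_ip_cutoff hq (aestronglyMeasurable_halfSign.mul continuous_ofReal.aestronglyMeasurable)
    fun _ => norm_halfSign_mul_le_one

theorem W22.ip_spline {q : ℝ → ℂ} (hq : MemLp q 2 volume) (n : ℕ) (r₁ r₂ s₁ s₂ : ℂ) :
    ip q (spline n r₁ r₂ s₁ s₂).f = r₁ * ip q (cutoff n 1) + r₂ * ip q (cutoff n (↑)) +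
      s₁ * ip q (cutoff n halfSign) + s₂ * ip q (cutoff n fun x => halfSign x * x) := by
  have h₁ := integrable_conj_mul_cutoff hq aestronglyMeasurable_one (g := 1) (C := 1)
    (fun _ _ => by simp) n
  have h₂ := integrable_conj_mul_cutoff hq continuous_ofReal.aestronglyMeasurable (C := 1)
    (fun x hx => by simpa using hx) n
  have h₃ := integrable_conj_mul_cutoff hq aestronglyMeasurable_halfSign
    (fun x _ => (norm_halfSign x).le) n
  have h₄ := integrable_conj_mul_cutoff hq (g := fun x => halfSign x * x)
    (aestronglyMeasurable_halfSign.mul continuous_ofReal.aestronglyMeasurable)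
    (fun _ => norm_halfSign_mul_le_one) n
  simp only [ip, spline_f, mul_add, mul_left_comm (conj (q _))]
  rw [integral_add ?_ (h₄.const_mul s₂), integral_add ?_ (h₃.const_mul s₁),
    integral_add (h₁.const_mul r₁) (h₂.const_mul r₂)]
  · simp only [integral_const_mul]
  · exact (h₁.const_mul r₁).add (h₂.const_mul r₂)
  · exact ((h₁.const_mul r₁).add (h₂.const_mul r₂)).add (h₃.const_mul s₁)

theorem stmt5_general (q₁ q₂ : ℝ → ℂ)
    (hq₁ : MemLp q₁ 2 (volume : Measure ℝ)) (hq₂ : MemLp q₂ 2 (volume : Measure ℝ))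
    (h₀ h₁ : ℂ × ℂ) :
    ∃ u : W22, Γ0 u = h₀ ∧ Γ1 q₁ q₂ u = h₁ := by
  obtain ⟨n, s₁, s₂, hs₁, hs₂⟩ := exists_sub_mul_add_mul_eq_of_tendsto_zero
    (tendsto_ip_cutoff_halfSign hq₂) (tendsto_ip_cutoff_halfSign_mul hq₂)
    (tendsto_ip_cutoff_halfSign hq₁) (tendsto_ip_cutoff_halfSign_mul hq₁)
    (fun n => h₁.2 + h₀.1 * ip q₂ (cutoff n 1) - h₀.2 * ip q₂ (cutoff n (↑)))
    (fun n => h₁.1 + h₀.1 * ip q₁ (cutoff n 1) - h₀.2 * ip q₁ (cutoff n (↑)))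
  refine ⟨W22.spline n h₀.1 (-h₀.2) s₁ s₂, by simp [Γ0, W22.spline_fr, W22.spline_dr], ?_⟩
  rw [Γ1, W22.spline_fs, W22.spline_ds, W22.ip_spline hq₁, W22.ip_spline hq₂]
  ext
  · linear_combination hs₂
  · linear_combination hs₁

/-- surjectivity of the boundary map `(Γ₀, Γ₁) : W²₂(ℝ\{0}) → ℂ² ⊕ ℂ²`:
for any `h₀, h₁ ∈ ℂ²` there is `f ∈ W²₂(ℝ\{0})` with `Γ₀ f = h₀` and `Γ₁ f = h₁`. -/
theorem stmt5 (q₁ q₂ : ℝ → ℂ)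
    (hq₁ : MemLp q₁ 2 (volume : Measure ℝ)) (hq₂ : MemLp q₂ 2 (volume : Measure ℝ))
    (hq₁pc : ∃ s : Finset ℝ, ∀ x ∉ s, ContinuousAt q₁ x)
    (hq₂pc : ∃ s : Finset ℝ, ∀ x ∉ s, ContinuousAt q₂ x)
    (h₀ h₁ : ℂ × ℂ) :
    ∃ u : W22, Γ0 u = h₀ ∧ Γ1 q₁ q₂ u = h₁ :=
  stmt5_general q₁ q₂ hq₁ hq₂ h₀ h₁
end

section
/- If a, d ∈ ℝ, b, c ∈ iℝ, PTq₁ = q₁ and PTq₂ = −q₂ (where (Pf)(x) = f(−x) and Tf = f*), then the matrix identity Tσ₃ = σ₃T* holds for T = [[a,b],[c,d]] and σ₃ = diag(1,−1), and the operator H_T defined by (4) with these data is PT-symmetric: PT H_T = H_T PT. -/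
open MeasureTheory Filter Set Complex

/-!
`PT` acts on the boundary values at the origin by `f_r ↦ f_r*`, `f'_r ↦ -f'_r*`,
`f_s ↦ -f_s*`, `f'_s ↦ f'_s*`, and the symmetries `PT q₁ = q₁`, `PT q₂ = -q₂` give
`(q₁, PT f) = (q₁, f)*` and `(q₂, PT f) = -(q₂, f)*`. Hence `Γⱼ (PT f) = σ₃ (Γⱼ f)*` for both
boundary maps, so `PT` preserves the condition `T Γ₀ f = Γ₁ f` because `T σ₃ = σ₃ T*`. The
action of `S_max` commutes with `PT` for the same reason.
-/

open scoped ComplexConjugate ENNReal Topology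

lemma Complex.conj_eq_neg_of_re_eq_zero {z : ℂ} (hz : z.re = 0) : conj z = -z :=
  Complex.ext (by simp [hz]) (by simp)

lemma Matrix.mul_sigma3_eq_sigma3_mul_map_conj {a b c d : ℂ} (ha : conj a = a) (hb : conj b = -b)
    (hc : conj c = -c) (hd : conj d = d) :
    !![a, b; c, d] * !![(1 : ℂ), 0; 0, -1] = !![(1 : ℂ), 0; 0, -1] * (!![a, b; c, d]).map conj := by
  ext i j
  fin_cases i <;> fin_cases j <;> simp [Matrix.mul_apply, ha, hb, hc, hd]

/-- `T σ₃ = σ₃ T*` read on vectors: `σ₃ ∘ conj` maps the graph of `T` to itself. -/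
lemma sigma3_conj_mem_graph {a b c d x y X Y : ℂ} (ha : conj a = a) (hb : conj b = -b)
    (hc : conj c = -c) (hd : conj d = d) (h : a * x + b * y = X ∧ c * x + d * y = Y) :
    a * conj x + b * -conj y = conj X ∧ c * conj x + d * -conj y = -conj Y := by
  obtain ⟨h₁, h₂⟩ := h
  have h₁' := congrArg conj h₁
  have h₂' := congrArg conj h₂
  simp only [map_add, map_mul, ha, hb, hc, hd] at h₁' h₂'
  constructor
  · linear_combination h₁'
  · linear_combination -h₂'

def pt (f : ℝ → ℂ) : ℝ → ℂ := fun x => conj (f (-x))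

@[simp] lemma pt_apply (f : ℝ → ℂ) (x : ℝ) : pt f x = conj (f (-x)) := rfl

lemma MeasureTheory.MemLp.pt {f : ℝ → ℂ} {p : ℝ≥0∞} (hf : MemLp f p) : MemLp (pt f) p := by
  have hneg : MemLp (fun x => f (-x)) p := hf.comp_measurePreserving (Measure.measurePreserving_neg _)
  exact hneg.of_le (Complex.continuous_conj.comp_aestronglyMeasurable hneg.1)
    (Eventually.of_forall fun x => by simp)

lemma HasDerivAt.pt {f : ℝ → ℂ} {f' : ℂ} {x : ℝ} (h : HasDerivAt f f' (-x)) :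
    HasDerivAt (pt f) (-conj f') x := by
  have hneg : HasDerivAt (fun y => f (-y)) (-f') x := by
    simpa [Function.comp_def] using h.scomp x (hasDerivAt_neg x)
  have hconj := hneg.star
  simp only [star_neg, Complex.star_def] at hconj
  exact hconj

lemma Filter.Tendsto.pt_nhdsGT {f : ℝ → ℂ} {l : ℂ} (h : Tendsto f (𝓝[<] 0) (𝓝 l)) :
    Tendsto (pt f) (𝓝[>] 0) (𝓝 (conj l)) :=
  (Complex.continuous_conj.tendsto l).comp (h.comp (by simpa using tendsto_neg_nhdsGT (a := (0 : ℝ))))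

lemma Filter.Tendsto.pt_nhdsLT {f : ℝ → ℂ} {l : ℂ} (h : Tendsto f (𝓝[>] 0) (𝓝 l)) :
    Tendsto (pt f) (𝓝[<] 0) (𝓝 (conj l)) :=
  (Complex.continuous_conj.tendsto l).comp (h.comp (by simpa using tendsto_neg_nhdsLT (a := (0 : ℝ))))

lemma ip_pt_right (g f : ℝ → ℂ) : ip g (pt f) = conj (ip (pt g) f) := by
  rw [ip, ip, ← integral_conj, ← integral_neg_eq_self]
  simp [mul_comm]

lemma ip_neg_left (g f : ℝ → ℂ) : ip (-g) f = -ip g f := by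
  simp [ip, integral_neg]

namespace W22

def pt (u : W22) : W22 where
  f := _root_.pt u.f
  d1 := -_root_.pt u.d1
  d2 := _root_.pt u.d2
  hd1 x hx := (u.hd1 (-x) (neg_ne_zero.2 hx)).pt
  hd2 x hx := by simpa using (u.hd2 (-x) (neg_ne_zero.2 hx)).pt.neg
  l2f := u.l2f.pt
  l2d1 := u.l2d1.pt.neg
  l2d2 := u.l2d2.pt
  fp := conj u.fm
  fm := conj u.fp
  dp := -conj u.dm
  dm := -conj u.dp
  hfp := u.hfm.pt_nhdsGT
  hfm := u.hfp.pt_nhdsLT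
  hdp := u.hdm.pt_nhdsGT.neg
  hdm := u.hdp.pt_nhdsLT.neg

lemma fr_pt (u : W22) : u.pt.fr = conj u.fr := by
  simp [pt, fr, map_ofNat, add_comm]

lemma dr_pt (u : W22) : u.pt.dr = -conj u.dr := by
  simp [pt, dr, map_ofNat, add_comm]; ring

lemma fs_pt (u : W22) : u.pt.fs = -conj u.fs := by
  simp [pt, fs]

lemma ds_pt (u : W22) : u.pt.ds = conj u.ds := by
  simp [pt, ds]; ring

end W22

lemma Γ0_pt (u : W22) : Γ0 u.pt = (conj (Γ0 u).1, -conj (Γ0 u).2) := by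
  simp [Γ0, W22.fr_pt, W22.dr_pt]

lemma Γ1_pt {q₁ q₂ : ℝ → ℂ} (hq₁ : pt q₁ = q₁) (hq₂ : pt q₂ = -q₂) (u : W22) :
    Γ1 q₁ q₂ u.pt = (conj (Γ1 q₁ q₂ u).1, -conj (Γ1 q₁ q₂ u).2) := by
  have hf : u.pt.f = pt u.f := rfl
  simp only [Γ1, W22.ds_pt, W22.fs_pt, hf, ip_pt_right, hq₁, hq₂, ip_neg_left, map_sub, map_neg]
  ring_nf

lemma Smax_pt {q₁ q₂ : ℝ → ℂ} (hq₁ : pt q₁ = q₁) (hq₂ : pt q₂ = -q₂) (u : W22) (x : ℝ) :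
    Smax q₁ q₂ u.pt x = conj (Smax q₁ q₂ u (-x)) := by
  have h₁ : q₁ x = conj (q₁ (-x)) := by simpa using (congrFun hq₁ x).symm
  have h₂ : q₂ x = -conj (q₂ (-x)) := by simpa [neg_eq_iff_eq_neg] using (congrFun hq₂ x).symm
  simp only [Smax, W22.fr_pt, W22.dr_pt, h₁, h₂, map_add, map_sub, map_mul, map_neg]
  simp [W22.pt]

def MemDomHT (a b c d : ℂ) (q₁ q₂ : ℝ → ℂ) (u : W22) : Prop :=
  a * (Γ0 u).1 + b * (Γ0 u).2 = (Γ1 q₁ q₂ u).1 ∧ c * (Γ0 u).1 + d * (Γ0 u).2 = (Γ1 q₁ q₂ u).2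

lemma MemDomHT.pt {a b c d : ℂ} {q₁ q₂ : ℝ → ℂ} (ha : conj a = a) (hb : conj b = -b)
    (hc : conj c = -c) (hd : conj d = d) (hq₁ : pt q₁ = q₁) (hq₂ : pt q₂ = -q₂) {u : W22}
    (hu : MemDomHT a b c d q₁ q₂ u) : MemDomHT a b c d q₁ q₂ u.pt := by
  rw [MemDomHT, Γ0_pt, Γ1_pt hq₁ hq₂]
  exact sigma3_conj_mem_graph ha hb hc hd hu

open Matrix in
theorem stmt7_general (a b c d : ℂ) (ha : a.im = 0) (hd : d.im = 0) (hb : b.re = 0) (hc : c.re = 0)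
    (q₁ q₂ : ℝ → ℂ)
    (hPTq₁ : ∀ x : ℝ, (starRingEnd ℂ) (q₁ (-x)) = q₁ x)
    (hPTq₂ : ∀ x : ℝ, (starRingEnd ℂ) (q₂ (-x)) = -q₂ x) :
    (!![a, b; c, d] * !![(1 : ℂ), 0; 0, -1]
        = !![(1 : ℂ), 0; 0, -1] * (!![a, b; c, d]).map (starRingEnd ℂ)) ∧
    ∀ u : W22,
      (a * (Γ0 u).1 + b * (Γ0 u).2 = (Γ1 q₁ q₂ u).1 ∧
       c * (Γ0 u).1 + d * (Γ0 u).2 = (Γ1 q₁ q₂ u).2) →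
      ∃ v : W22, (∀ x : ℝ, v.f x = (starRingEnd ℂ) (u.f (-x))) ∧
        (a * (Γ0 v).1 + b * (Γ0 v).2 = (Γ1 q₁ q₂ v).1 ∧
         c * (Γ0 v).1 + d * (Γ0 v).2 = (Γ1 q₁ q₂ v).2) ∧
        ∀ x : ℝ, x ≠ 0 → Smax q₁ q₂ v x = (starRingEnd ℂ) (Smax q₁ q₂ u (-x)) := by
  have ha' : conj a = a := Complex.conj_eq_iff_im.2 ha
  have hd' : conj d = d := Complex.conj_eq_iff_im.2 hd
  have hb' : conj b = -b := Complex.conj_eq_neg_of_re_eq_zero hb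
  have hc' : conj c = -c := Complex.conj_eq_neg_of_re_eq_zero hc
  have hq₁ : pt q₁ = q₁ := funext hPTq₁
  have hq₂ : pt q₂ = -q₂ := funext hPTq₂
  refine ⟨Matrix.mul_sigma3_eq_sigma3_mul_map_conj ha' hb' hc' hd', fun u hu => ?_⟩
  exact ⟨u.pt, fun x => rfl, MemDomHT.pt ha' hb' hc' hd' hq₁ hq₂ hu,
    fun x _ => Smax_pt hq₁ hq₂ u x⟩

open Matrix in
/-- if `a, d ∈ ℝ`, `b, c ∈ iℝ`, `PT q₁ = q₁`, `PT q₂ = -q₂`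
(`(Pf)(x) = f(-x)`, `Tf = f*`), then `Tσ₃ = σ₃ T*` holds for `T = [[a,b],[c,d]]`,
`σ₃ = diag(1,-1)`, and the operator `H_T` is `PT`-symmetric: `PT` maps the domain
`{f : TΓ₀f = Γ₁f}` into itself and `H_T (PT f) = PT (H_T f)`. -/
theorem stmt7 (a b c d : ℂ) (ha : a.im = 0) (hd : d.im = 0) (hb : b.re = 0) (hc : c.re = 0)
    (q₁ q₂ : ℝ → ℂ)
    (hq₁ : MemLp q₁ 2 (volume : Measure ℝ)) (hq₂ : MemLp q₂ 2 (volume : Measure ℝ))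
    (hq₁pc : ∃ s : Finset ℝ, ∀ x ∉ s, ContinuousAt q₁ x)
    (hq₂pc : ∃ s : Finset ℝ, ∀ x ∉ s, ContinuousAt q₂ x)
    (hPTq₁ : ∀ x : ℝ, (starRingEnd ℂ) (q₁ (-x)) = q₁ x)
    (hPTq₂ : ∀ x : ℝ, (starRingEnd ℂ) (q₂ (-x)) = -q₂ x) :
    (!![a, b; c, d] * !![(1 : ℂ), 0; 0, -1]
        = !![(1 : ℂ), 0; 0, -1] * (!![a, b; c, d]).map (starRingEnd ℂ)) ∧
    ∀ u : W22,
      (a * (Γ0 u).1 + b * (Γ0 u).2 = (Γ1 q₁ q₂ u).1 ∧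
       c * (Γ0 u).1 + d * (Γ0 u).2 = (Γ1 q₁ q₂ u).2) →
      ∃ v : W22, (∀ x : ℝ, v.f x = (starRingEnd ℂ) (u.f (-x))) ∧
        (a * (Γ0 v).1 + b * (Γ0 v).2 = (Γ1 q₁ q₂ v).1 ∧
         c * (Γ0 v).1 + d * (Γ0 v).2 = (Γ1 q₁ q₂ v).2) ∧
        ∀ x : ℝ, x ≠ 0 → Smax q₁ q₂ v x = (starRingEnd ℂ) (Smax q₁ q₂ u (-x)) :=
  stmt7_general a b c d ha hd hb hc q₁ q₂ hPTq₁ hPTq₂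
end

section
/- Let q be an even piecewise-continuous function supported in [−ρ,ρ], k ∈ ℝ\{0}, and u_λ the generalized eigenfunction given by (14). Then for |x| > ρ, u_λ(x) = β_k e^{ik|x|} where β_k = 1 − (1/k)∫₀^ρ sin(ks) q(s) ds; consequently u_λ ∈ L²(ℝ) if and only if β_k = 0. -/
open MeasureTheory Filter Set Complex

/-! The potential is supported in `[-ρ, ρ]`, so for `x > ρ` the tail `B_k(x)` vanishes and
`A_k(x)` freezes at `1 + (i/2k) ∫₀^ρ (e^{iks} - e^{-iks}) q(s) ds = β_k`. Evenness of `q` turns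
`C_k, D_k` into `B_k, A_k` at `-x`, hence `u_λ(x) = u_λ(|x|)`. Thus `|u_λ| = |β_k|` on the
infinite-measure set `|x| > ρ`, which forces `β_k = 0` for `u_λ ∈ L²`; conversely, when
`β_k = 0` the continuous function `u_λ` has compact support. -/

lemma MeasureTheory.MemLp.integrable_of_forall_notMem_eq_zero {α E : Type*} [MeasurableSpace α]
    [NormedAddCommGroup E] {μ : Measure α} {p : ENNReal} {f : α → E} {s : Set α}
    (hf : MemLp f p μ) (hp : 1 ≤ p) (hs : μ s ≠ ⊤) (hzero : ∀ x ∉ s, f x = 0) :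
    Integrable f μ :=
  memLp_one_iff_integrable.1 (hf.mono_exponent_of_measure_support_ne_top hzero hs hp)

lemma MeasureTheory.MemLp.eq_zero_of_le_nnnorm_of_measure_eq_top {α E : Type*} [MeasurableSpace α]
    [NormedAddCommGroup E] {μ : Measure α} {p : ENNReal} {f : α → E} {s : Set α}
    (hf : MemLp f p μ) (hp0 : p ≠ 0) (hp : p ≠ ⊤) (hs : μ s = ⊤) {c : NNReal}
    (hc : ∀ x ∈ s, c ≤ ‖f x‖₊) : c = 0 := by
  by_contra h
  have hfin := hf.meas_ge_lt_top hp0 hp h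
  exact (measure_mono_top (fun x hx => hc x hx) hs).not_lt hfin

lemma integral_Ioi_eq_intervalIntegral_of_forall_gt_eq_zero {E : Type*} [NormedAddCommGroup E]
    [NormedSpace ℝ E] {g : ℝ → E} {a x : ℝ} (hax : a ≤ x) (hg : ∀ t, x < t → g t = 0) :
    ∫ t in Ioi a, g t = ∫ t in a..x, g t := by
  rw [intervalIntegral.integral_of_le hax]
  exact setIntegral_eq_of_subset_of_forall_sdiff_eq_zero measurableSet_Ioi Ioc_subset_Ioi_self
    fun t ht => hg t (not_le.1 fun h => ht.2 ⟨ht.1, h⟩)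

lemma intervalIntegral_eq_of_forall_gt_eq_zero {E : Type*} [NormedAddCommGroup E] [NormedSpace ℝ E]
    {g : ℝ → E} (hg : Integrable g) {a ρ x : ℝ} (hx : ρ ≤ x) (hvanish : ∀ t, ρ < t → g t = 0) :
    ∫ t in a..x, g t = ∫ t in a..ρ, g t := by
  have htail : ∫ t in ρ..x, g t = 0 :=
    intervalIntegral.integral_zero_ae (ae_of_all _ fun t ht => hvanish t (by
      rw [uIoc_of_le hx] at ht
      exact ht.1))
  rw [← intervalIntegral.integral_add_adjacent_intervals hg.intervalIntegrable
    hg.intervalIntegrable, htail, add_zero]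

lemma I_div_two_mul_exp_sub_exp_neg (k s : ℝ) :
    I / (2 * k) * (exp (I * k * s) - exp (-(I * k * s))) = -(1 / (k : ℂ)) * Real.sin (k * s) := by
  rw [ofReal_sin, Complex.sin]
  push_cast
  ring_nf

lemma norm_exp_I_mul_ofReal_mul (k s : ℝ) : ‖exp (I * k * s)‖ = 1 := by
  rw [mul_assoc, ← ofReal_mul, norm_exp_I_mul_ofReal]

lemma norm_exp_neg_I_mul_ofReal_mul (k s : ℝ) : ‖exp (-(I * k * s))‖ = 1 := by
  rw [← mul_neg, mul_assoc, ← ofReal_neg, ← ofReal_mul, norm_exp_I_mul_ofReal]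

namespace GenEigenfunction

variable (k : ℝ) (q : ℝ → ℂ)

noncomputable def A (x : ℝ) : ℂ :=
  1 + I / (2 * k) * (∫ s in Ioi (0 : ℝ), exp (I * k * s) * q s)
    - I / (2 * k) * (∫ s in (0 : ℝ)..x, exp (-(I * k * s)) * q s)

noncomputable def B (x : ℝ) : ℂ :=
  -(I / (2 * k)) * ∫ s in Ioi x, exp (I * k * s) * q s

noncomputable def C (x : ℝ) : ℂ :=
  -(I / (2 * k)) * ∫ s in Iio x, exp (-(I * k * s)) * q s

noncomputable def D (x : ℝ) : ℂ :=
  1 + I / (2 * k) * (∫ s in Iio (0 : ℝ), exp (-(I * k * s)) * q s)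
    - I / (2 * k) * (∫ s in x..(0 : ℝ), exp (I * k * s) * q s)

noncomputable def uPos (x : ℝ) : ℂ :=
  A k q x * exp (I * k * x) + B k q x * exp (-(I * k * x))

noncomputable def uNeg (x : ℝ) : ℂ :=
  C k q x * exp (I * k * x) + D k q x * exp (-(I * k * x))

noncomputable def u (x : ℝ) : ℂ := if 0 < x then uPos k q x else uNeg k q x

variable {k q}

lemma integrable_exp_mul (hq : Integrable q) : Integrable fun s : ℝ => exp (I * k * s) * q s :=
  hq.bdd_mul (by fun_prop) (ae_of_all _ fun s => (norm_exp_I_mul_ofReal_mul k s).le)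

lemma integrable_exp_neg_mul (hq : Integrable q) :
    Integrable fun s : ℝ => exp (-(I * k * s)) * q s :=
  hq.bdd_mul (by fun_prop) (ae_of_all _ fun s => (norm_exp_neg_I_mul_ofReal_mul k s).le)

lemma integrable_sin_mul (hq : Integrable q) :
    Integrable fun s : ℝ => (Real.sin (k * s) : ℂ) * q s :=
  hq.bdd_mul (by fun_prop) (ae_of_all _ fun s => by
    rw [norm_real, Real.norm_eq_abs]; exact Real.abs_sin_le_one _)

lemma continuous_A (hq : Integrable q) : Continuous (A k q) :=
  continuous_const.sub (continuous_const.mul ((integrable_exp_neg_mul hq).continuous_primitive 0))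

lemma continuous_B (hq : Integrable q) : Continuous (B k q) := by
  have hint := integrable_exp_mul (k := k) hq
  have hB : B k q = fun x => -(I / (2 * k)) *
      ((∫ s in Ioi (0 : ℝ), exp (I * k * s) * q s) - ∫ s in (0 : ℝ)..x, exp (I * k * s) * q s) := by
    funext x
    rw [B, ← intervalIntegral.integral_Ioi_sub_Ioi' hint.integrableOn hint.integrableOn,
      sub_sub_cancel]
  rw [hB]
  exact continuous_const.mul (continuous_const.sub (hint.continuous_primitive 0))

lemma continuous_uPos (hq : Integrable q) : Continuous (uPos k q) :=
  ((continuous_A hq).mul (by fun_prop)).add ((continuous_B hq).mul (by fun_prop))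

section Support

variable {ρ x : ℝ} (hvanish : ∀ t, ρ < t → q t = 0)
include hvanish

lemma B_eq_zero (hx : ρ ≤ x) : B k q x = 0 := by
  rw [B, setIntegral_eq_zero_of_forall_eq_zero fun t (ht : t ∈ Ioi x) => by
    rw [hvanish t (hx.trans_lt ht), mul_zero], mul_zero]

lemma A_eq (hq : Integrable q) (hx0 : 0 ≤ x) (hx : ρ ≤ x) :
    A k q x = 1 - (1 / (k : ℂ)) * ∫ s in (0 : ℝ)..ρ, (Real.sin (k * s) : ℂ) * q s := by
  have hsin : I / (2 * k) * (∫ s in (0 : ℝ)..x, exp (I * k * s) * q s)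
      - I / (2 * k) * (∫ s in (0 : ℝ)..x, exp (-(I * k * s)) * q s)
      = -(1 / (k : ℂ)) * ∫ s in (0 : ℝ)..x, (Real.sin (k * s) : ℂ) * q s := by
    simp only [← intervalIntegral.integral_const_mul]
    rw [← intervalIntegral.integral_sub ((integrable_exp_mul hq).const_mul _).intervalIntegrable
      ((integrable_exp_neg_mul hq).const_mul _).intervalIntegrable]
    congr 1
    funext s
    linear_combination q s * I_div_two_mul_exp_sub_exp_neg k s
  rw [A, integral_Ioi_eq_intervalIntegral_of_forall_gt_eq_zero hx0 fun t ht => by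
      rw [hvanish t (hx.trans_lt ht), mul_zero],
    ← intervalIntegral_eq_of_forall_gt_eq_zero (integrable_sin_mul hq) hx fun t ht => by
      rw [hvanish t ht, mul_zero]]
  linear_combination hsin

lemma uPos_eq (hq : Integrable q) (hx0 : 0 ≤ x) (hx : ρ ≤ x) :
    uPos k q x = (1 - (1 / (k : ℂ)) * ∫ s in (0 : ℝ)..ρ, (Real.sin (k * s) : ℂ) * q s)
      * exp (I * k * x) := by
  rw [uPos, A_eq hvanish hq hx0 hx, B_eq_zero hvanish hx, zero_mul, add_zero]

end Support

section Even

variable (hqeven : ∀ x : ℝ, q (-x) = q x)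
include hqeven

lemma integral_Iio_exp_neg_mul (a : ℝ) :
    ∫ s in Iio a, exp (-(I * k * s)) * q s = ∫ s in Ioi (-a), exp (I * k * s) * q s := by
  rw [← integral_Iic_eq_integral_Iio, ← integral_comp_neg_Iic]
  simp only [ofReal_neg, mul_neg, hqeven]

lemma C_eq_B_neg (x : ℝ) : C k q x = B k q (-x) := by
  rw [C, B, integral_Iio_exp_neg_mul hqeven]

lemma D_eq_A_neg (x : ℝ) : D k q x = A k q (-x) := by
  have hflip :
      ∫ s in x..0, exp (I * k * s) * q s = ∫ s in (0 : ℝ)..-x, exp (-(I * k * s)) * q s := by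
    rw [← neg_zero, ← intervalIntegral.integral_comp_neg]
    simp only [ofReal_neg, mul_neg, neg_neg, neg_zero, hqeven]
  rw [D, A, integral_Iio_exp_neg_mul hqeven, neg_zero, hflip]

lemma uNeg_eq_uPos_neg (x : ℝ) : uNeg k q x = uPos k q (-x) := by
  rw [uNeg, uPos, C_eq_B_neg hqeven, D_eq_A_neg hqeven, ofReal_neg, mul_neg, neg_neg, add_comm]

lemma u_eq_uPos_abs (x : ℝ) : u k q x = uPos k q |x| := by
  rw [u]
  split_ifs with hx
  · rw [abs_of_pos hx]
  · rw [abs_of_nonpos (not_lt.1 hx), uNeg_eq_uPos_neg hqeven]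

lemma continuous_u (hq : Integrable q) : Continuous (u k q) := by
  rw [funext (u_eq_uPos_abs hqeven)]
  exact (continuous_uPos hq).comp continuous_abs

lemma u_eq_of_lt_abs (hq : Integrable q) {ρ x : ℝ} (hvanish : ∀ t, ρ < t → q t = 0)
    (hx : ρ < |x|) :
    u k q x = (1 - (1 / (k : ℂ)) * ∫ s in (0 : ℝ)..ρ, (Real.sin (k * s) : ℂ) * q s)
      * exp (I * k * |x|) := by
  rw [u_eq_uPos_abs hqeven, uPos_eq hvanish hq (abs_nonneg x) hx.le]

end Even

end GenEigenfunction

theorem stmt14_general (k ρ : ℝ)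
    (q : ℝ → ℂ) (hq : MemLp q 2 (volume : Measure ℝ))
    (hqeven : ∀ x : ℝ, q (-x) = q x)
    (hsupp : ∀ x : ℝ, x ∉ Set.Icc (-ρ) ρ → q x = 0)
    (A B C D u : ℝ → ℂ)
    (hA : ∀ x : ℝ, A x = 1 + Complex.I / (2 * k) * (∫ s in Set.Ioi (0 : ℝ),
            Complex.exp (Complex.I * k * s) * q s)
          - Complex.I / (2 * k) * (∫ s in (0 : ℝ)..x, Complex.exp (-(Complex.I * k * s)) * q s))
    (hB : ∀ x : ℝ, B x = -(Complex.I / (2 * k)) * ∫ s in Set.Ioi x,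
            Complex.exp (Complex.I * k * s) * q s)
    (hC : ∀ x : ℝ, C x = -(Complex.I / (2 * k)) * ∫ s in Set.Iio x,
            Complex.exp (-(Complex.I * k * s)) * q s)
    (hD : ∀ x : ℝ, D x = 1 + Complex.I / (2 * k) * (∫ s in Set.Iio (0 : ℝ),
            Complex.exp (-(Complex.I * k * s)) * q s)
          - Complex.I / (2 * k) * (∫ s in x..(0 : ℝ), Complex.exp (Complex.I * k * s) * q s))
    (hu : ∀ x : ℝ, u x = if 0 < x
            then A x * Complex.exp (Complex.I * k * x) + B x * Complex.exp (-(Complex.I * k * x))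
            else C x * Complex.exp (Complex.I * k * x) + D x * Complex.exp (-(Complex.I * k * x)))
    (β : ℂ)
    (hβ : β = 1 - (1 / (k : ℂ)) * ∫ s in (0 : ℝ)..ρ, (Real.sin (k * s) : ℂ) * q s) :
    (∀ x : ℝ, ρ < |x| → u x = β * Complex.exp (Complex.I * k * |x|)) ∧
    (MemLp u 2 (volume : Measure ℝ) ↔ β = 0) := by
  obtain rfl : A = GenEigenfunction.A k q := funext hA
  obtain rfl : B = GenEigenfunction.B k q := funext hB
  obtain rfl : C = GenEigenfunction.C k q := funext hC
  obtain rfl : D = GenEigenfunction.D k q := funext hD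
  obtain rfl : u = GenEigenfunction.u k q := funext hu
  have hqint : Integrable q := hq.integrable_of_forall_notMem_eq_zero one_le_two
    measure_Icc_lt_top.ne hsupp
  have hvanish : ∀ t, ρ < t → q t = 0 := fun t ht => hsupp t fun h => ht.not_ge h.2
  have hfar : ∀ x : ℝ, ρ < |x| → GenEigenfunction.u k q x = β * exp (I * k * |x|) :=
    fun x hx => hβ ▸ GenEigenfunction.u_eq_of_lt_abs hqeven hqint hvanish hx
  refine ⟨hfar, fun hL2 => ?_, fun hβ0 => ?_⟩
  · refine nnnorm_eq_zero.1 (hL2.eq_zero_of_le_nnnorm_of_measure_eq_top two_ne_zero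
      ENNReal.ofNat_ne_top (Real.volume_Ioi (a := |ρ|)) fun x (hx : |ρ| < x) => ?_)
    rw [hfar x ((le_abs_self ρ).trans_lt (hx.trans_le (le_abs_self x))), nnnorm_mul,
      ← NNReal.coe_le_coe, NNReal.coe_mul, coe_nnnorm, coe_nnnorm, norm_exp_I_mul_ofReal_mul,
      mul_one]
  · refine (GenEigenfunction.continuous_u hqeven hqint).memLp_of_hasCompactSupport <|
      HasCompactSupport.intro (isCompact_Icc (a := -ρ) (b := ρ)) fun x hx => ?_
    rw [hfar x (not_le.1 fun h => hx (abs_le.1 h)), hβ0, zero_mul]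

/-- for `q` even, piecewise continuous, supported in `[-ρ,ρ]`, and
`k ∈ ℝ\{0}`, the generalized eigenfunction `u_λ` satisfies
`u_λ(x) = β_k e^{ik|x|}` for `|x| > ρ`, with `β_k = 1 - (1/k)∫₀^ρ sin(ks) q(s) ds`;
consequently `u_λ ∈ L²(ℝ)` iff `β_k = 0`. -/
theorem stmt14 (k ρ : ℝ) (hk : k ≠ 0) (hρ : 0 < ρ)
    (q : ℝ → ℂ) (hq : MemLp q 2 (volume : Measure ℝ))
    (hqpc : ∃ s : Finset ℝ, ∀ x ∉ s, ContinuousAt q x)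
    (hqeven : ∀ x : ℝ, q (-x) = q x)
    (hsupp : ∀ x : ℝ, x ∉ Set.Icc (-ρ) ρ → q x = 0)
    (A B C D u : ℝ → ℂ)
    (hA : ∀ x : ℝ, A x = 1 + Complex.I / (2 * k) * (∫ s in Set.Ioi (0 : ℝ),
            Complex.exp (Complex.I * k * s) * q s)
          - Complex.I / (2 * k) * (∫ s in (0 : ℝ)..x, Complex.exp (-(Complex.I * k * s)) * q s))
    (hB : ∀ x : ℝ, B x = -(Complex.I / (2 * k)) * ∫ s in Set.Ioi x,
            Complex.exp (Complex.I * k * s) * q s)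
    (hC : ∀ x : ℝ, C x = -(Complex.I / (2 * k)) * ∫ s in Set.Iio x,
            Complex.exp (-(Complex.I * k * s)) * q s)
    (hD : ∀ x : ℝ, D x = 1 + Complex.I / (2 * k) * (∫ s in Set.Iio (0 : ℝ),
            Complex.exp (-(Complex.I * k * s)) * q s)
          - Complex.I / (2 * k) * (∫ s in x..(0 : ℝ), Complex.exp (Complex.I * k * s) * q s))
    (hu : ∀ x : ℝ, u x = if 0 < x
            then A x * Complex.exp (Complex.I * k * x) + B x * Complex.exp (-(Complex.I * k * x))
            else C x * Complex.exp (Complex.I * k * x) + D x * Complex.exp (-(Complex.I * k * x)))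
    (β : ℂ)
    (hβ : β = 1 - (1 / (k : ℂ)) * ∫ s in (0 : ℝ)..ρ, (Real.sin (k * s) : ℂ) * q s) :
    (∀ x : ℝ, ρ < |x| → u x = β * Complex.exp (Complex.I * k * |x|)) ∧
    (MemLp u 2 (volume : Measure ℝ) ↔ β = 0) :=
  stmt14_general k ρ q hq hqeven hsupp A B C D u hA hB hC hD hu β hβ
end

section
/- Let q(x) = Z·χ_{[−ρ,ρ]}(x) with Z ∈ ℝ, ρ > 0, and suppose k₀ ∈ ℝ\{0} solves Z(1 − cos(k₀ρ)) = k₀². Then the function u(x) = (Z/k₀²)(1 − cos(k₀(ρ−|x|)))·χ_{[−ρ,ρ]}(x) is continuous on ℝ, lies in W²₂(ℝ\{0}), and satisfies −u'' + u(0)q(x) = k₀² u(x) for x ∉ {0, ±ρ}, together with u'(0+) − u'(0−) = a u(0) + Z∫_{−ρ}^{ρ} u(x) dx where a = (Z²/k₀²)(sin(2k₀ρ)/k₀ − 2ρ). -/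
/-!
On `[0, ρ]` the function `u` is the profile `φ t = (Z/k₀²)(1 - cos (k₀ (ρ - t)))`, which
solves `-φ'' + Z = k₀² φ`; `u` is its even extension cut off outside `[-ρ, ρ]`, and the
characteristic equation says exactly that `u 0 = φ 0 = 1`. Away from `0, ±ρ` the chain rule
through `|x|` makes `u'` the odd extension of `φ'` and `u''` the even extension of `φ''`, so the
jump of `u'` at `0` is `2 φ' 0 = -2 (Z/k₀) sin (k₀ρ)`. The right-hand side `a + 2 Z ∫₀^ρ φ`
gives the same value after `sin 2θ = 2 sin θ cos θ` and one more use of the characteristic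
equation.
-/

open MeasureTheory Filter Set Topology Real

noncomputable section

def evenCutoff (ρ : ℝ) (φ : ℝ → ℝ) (y : ℝ) : ℝ := if |y| ≤ ρ then φ |y| else 0

def oddCutoff (ρ : ℝ) (φ : ℝ → ℝ) (y : ℝ) : ℝ := SignType.sign y * evenCutoff ρ φ y

end

section Cutoff

variable {ρ y d : ℝ} {φ φ' : ℝ → ℝ}

theorem HasDerivAt.ite_le_zero {t : ℝ} (hφ : HasDerivAt φ d t) (ht : t ≠ ρ) :
    HasDerivAt (fun s => if s ≤ ρ then φ s else 0) (if t ≤ ρ then d else 0) t := by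
  rcases ht.lt_or_gt with ht | ht
  · rw [if_pos ht.le]
    exact hφ.congr_of_eventuallyEq <|
      eventually_of_mem (Iio_mem_nhds ht) fun s hs => if_pos (le_of_lt hs)
  · rw [if_neg ht.not_ge]
    exact (hasDerivAt_const t 0).congr_of_eventuallyEq <|
      eventually_of_mem (Ioi_mem_nhds ht) fun s hs => if_neg (not_le.2 hs)

theorem hasDerivAt_evenCutoff (hy : y ≠ 0) (hyρ : |y| ≠ ρ) (hφ : HasDerivAt φ (φ' |y|) |y|) :
    HasDerivAt (evenCutoff ρ φ) (oddCutoff ρ φ' y) y :=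
  ((hφ.ite_le_zero hyρ).comp y (hasDerivAt_abs hy)).congr_deriv (mul_comm _ _)

theorem eventually_sign_eq_of_ne_zero (hy : y ≠ 0) :
    ∀ᶠ z in 𝓝 y, SignType.sign z = SignType.sign y :=
  (continuousAt_sign_of_ne_zero hy).eventually_mem
    ((isOpen_discrete {SignType.sign y}).mem_nhds rfl)

theorem hasDerivAt_oddCutoff (hy : y ≠ 0) (hyρ : |y| ≠ ρ) (hφ : HasDerivAt φ (φ' |y|) |y|) :
    HasDerivAt (oddCutoff ρ φ) (evenCutoff ρ φ' y) y := by
  have h := (hasDerivAt_evenCutoff hy hyρ hφ).const_mul (SignType.sign y : ℝ)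
  have hsq : (SignType.sign y : ℝ) * SignType.sign y = 1 := by
    rcases hy.lt_or_gt with hy | hy <;> simp [hy]
  rw [oddCutoff, ← mul_assoc, hsq, one_mul] at h
  exact h.congr_of_eventuallyEq <|
    (eventually_sign_eq_of_ne_zero hy).mono fun z hz => by simp [oddCutoff, hz]

theorem continuous_evenCutoff (hφ : Continuous φ) (hφρ : φ ρ = 0) :
    Continuous (evenCutoff ρ φ) :=
  Continuous.if_le (hφ.comp continuous_abs) continuous_const continuous_abs continuous_const
    fun y hy => by simp [hy, hφρ]

theorem hasCompactSupport_evenCutoff : HasCompactSupport (evenCutoff ρ φ) :=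
  HasCompactSupport.intro (isCompact_Icc (a := -ρ) (b := ρ)) fun y hy => by
    rw [evenCutoff, if_neg (by rwa [abs_le, ← mem_Icc])]

theorem tendsto_oddCutoff_nhdsGT (hρ : 0 < ρ) (hφ : ContinuousAt φ 0) :
    Tendsto (oddCutoff ρ φ) (𝓝[>] 0) (𝓝 (φ 0)) := by
  refine (hφ.tendsto.mono_left nhdsWithin_le_nhds).congr' ?_
  filter_upwards [Ioo_mem_nhdsGT hρ] with z hz
  simp [oddCutoff, evenCutoff, hz.1, abs_of_pos hz.1, hz.2.le]

theorem tendsto_oddCutoff_nhdsLT (hρ : 0 < ρ) (hφ : ContinuousAt φ 0) :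
    Tendsto (oddCutoff ρ φ) (𝓝[<] 0) (𝓝 (-φ 0)) := by
  have : ContinuousAt (fun z => -φ (-z)) 0 :=
    ((neg_zero (G := ℝ) ▸ hφ).comp continuous_neg.continuousAt).neg
  replace : Tendsto (fun z => -φ (-z)) (𝓝 0) (𝓝 (-φ 0)) := by simpa using this.tendsto
  refine (this.mono_left nhdsWithin_le_nhds).congr' ?_
  filter_upwards [Ioo_mem_nhdsLT (neg_lt_zero.2 hρ)] with z hz
  simp [oddCutoff, evenCutoff, hz.2, abs_of_neg hz.2, neg_le.1 hz.1.le]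

theorem evenCutoff_neg (y : ℝ) : evenCutoff ρ φ (-y) = evenCutoff ρ φ y := by
  simp only [evenCutoff, abs_neg]

theorem integral_evenCutoff (hρ : 0 ≤ ρ) (hφ : IntervalIntegrable φ volume 0 ρ) :
    ∫ y in -ρ..ρ, evenCutoff ρ φ y = 2 * ∫ t in 0..ρ, φ t := by
  have heq : EqOn φ (evenCutoff ρ φ) (uIcc 0 ρ) := fun z hz => by
    rw [uIcc_of_le hρ] at hz
    simp [evenCutoff, abs_of_nonneg hz.1, hz.2]
  have hright : IntervalIntegrable (evenCutoff ρ φ) volume 0 ρ :=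
    hφ.congr (heq.mono Ioc_subset_Icc_self)
  have hleft : IntervalIntegrable (evenCutoff ρ φ) volume (-ρ) 0 := by
    simpa [evenCutoff_neg] using ((IntervalIntegrable.iff_comp_neg).1 hright).symm
  have hsymm : ∫ y in -ρ..0, evenCutoff ρ φ y = ∫ y in 0..ρ, evenCutoff ρ φ y := by
    simpa [evenCutoff_neg] using
      (intervalIntegral.integral_comp_neg (a := 0) (b := ρ) (evenCutoff ρ φ)).symm
  rw [← intervalIntegral.integral_add_adjacent_intervals hleft hright, hsymm,
    intervalIntegral.integral_congr heq.symm, two_mul]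

theorem ne_zero_and_abs_ne_of_notMem {x : ℝ} (hx : x ∉ ({0, ρ, -ρ} : Set ℝ)) :
    x ≠ 0 ∧ |x| ≠ ρ := by
  simp only [mem_insert_iff, mem_singleton_iff, not_or] at hx
  exact ⟨hx.1, fun h => (abs_eq (h ▸ abs_nonneg x)).1 h |>.elim hx.2.1 hx.2.2⟩

end Cutoff

section Profile

variable (C k ρ : ℝ)

theorem hasDerivAt_mul_one_sub_cos (t : ℝ) :
    HasDerivAt (fun t => C * (1 - cos (k * (ρ - t)))) (-(C * k * sin (k * (ρ - t)))) t := by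
  have := ((((hasDerivAt_id' t).const_sub ρ).const_mul k).cos.const_sub 1).const_mul C
  exact this.congr_deriv (by ring)

theorem hasDerivAt_neg_mul_sin (t : ℝ) :
    HasDerivAt (fun t => -(C * k * sin (k * (ρ - t)))) (C * k ^ 2 * cos (k * (ρ - t))) t := by
  have := ((((hasDerivAt_id' t).const_sub ρ).const_mul k).sin.const_mul (C * k)).neg
  exact this.congr_deriv (by ring)

theorem integral_mul_one_sub_cos {k : ℝ} (hk : k ≠ 0) :
    ∫ t in 0..ρ, C * (1 - cos (k * (ρ - t))) = C * (ρ - sin (k * ρ) / k) := by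
  have hcos : ∫ t in 0..ρ, cos (k * (ρ - t)) = sin (k * ρ) / k := by
    rw [intervalIntegral.integral_comp_sub_left (fun s => cos (k * s)),
      intervalIntegral.integral_comp_mul_left _ hk]
    simp [integral_cos, div_eq_inv_mul]
  rw [intervalIntegral.integral_const_mul, intervalIntegral.integral_sub intervalIntegrable_const
    ((by fun_prop : Continuous _).intervalIntegrable _ _), hcos, intervalIntegral.integral_const,
    smul_eq_mul, mul_one, sub_zero]

end Profile

/-- for `q = Z·χ_[−ρ,ρ]` with `Z ∈ ℝ`, `ρ > 0`, and `k₀ ∈ ℝ\{0}` solving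
`Z(1 - cos(k₀ρ)) = k₀²`, the function `u(x) = (Z/k₀²)(1 - cos(k₀(ρ-|x|)))·χ_[−ρ,ρ](x)`
is continuous, lies in `W²₂(ℝ\{0})`, satisfies `-u'' + u(0) q = k₀² u` off `{0, ±ρ}`,
and `u'(0+) - u'(0-) = a u(0) + Z ∫_{-ρ}^{ρ} u` with
`a = (Z²/k₀²)(sin(2k₀ρ)/k₀ - 2ρ)`. -/
theorem stmt15 (Z ρ k₀ : ℝ) (hρ : 0 < ρ) (hk₀ : k₀ ≠ 0)
    (hchar : Z * (1 - Real.cos (k₀ * ρ)) = k₀ ^ 2)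
    (q : ℝ → ℝ) (hq : ∀ x : ℝ, q x = if x ∈ Set.Icc (-ρ) ρ then Z else 0)
    (u : ℝ → ℝ)
    (hu : ∀ x : ℝ, u x = if x ∈ Set.Icc (-ρ) ρ
            then Z / k₀ ^ 2 * (1 - Real.cos (k₀ * (ρ - |x|))) else 0)
    (a : ℝ) (ha : a = Z ^ 2 / k₀ ^ 2 * (Real.sin (2 * k₀ * ρ) / k₀ - 2 * ρ)) :
    Continuous u ∧ MemLp u 2 (volume : Measure ℝ) ∧
    ∃ u' u'' : ℝ → ℝ,
      (∀ x : ℝ, x ∉ ({0, ρ, -ρ} : Set ℝ) → HasDerivAt u (u' x) x) ∧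
      (∀ x : ℝ, x ∉ ({0, ρ, -ρ} : Set ℝ) → HasDerivAt u' (u'' x) x) ∧
      (∀ x : ℝ, x ∉ ({0, ρ, -ρ} : Set ℝ) → -u'' x + u 0 * q x = k₀ ^ 2 * u x) ∧
      ∃ Lp Lm : ℝ,
        Tendsto u' (nhdsWithin 0 (Set.Ioi 0)) (nhds Lp) ∧
        Tendsto u' (nhdsWithin 0 (Set.Iio 0)) (nhds Lm) ∧
        Lp - Lm = a * u 0 + Z * ∫ x in (-ρ)..ρ, u x := by
  set C := Z / k₀ ^ 2
  set φ : ℝ → ℝ := fun t => C * (1 - cos (k₀ * (ρ - t)))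
  set φ₁ : ℝ → ℝ := fun t => -(C * k₀ * sin (k₀ * (ρ - t)))
  set φ₂ : ℝ → ℝ := fun t => C * k₀ ^ 2 * cos (k₀ * (ρ - t))
  have hφ : Continuous φ := by fun_prop
  obtain rfl : u = evenCutoff ρ φ := funext fun x => by
    simp only [hu, evenCutoff, mem_Icc, abs_le]; rfl
  obtain rfl : q = evenCutoff ρ fun _ => Z := funext fun x => by
    simp only [hq, evenCutoff, mem_Icc, abs_le]
  have hu0 : evenCutoff ρ φ 0 = 1 := by
    simp only [evenCutoff, abs_zero, hρ.le, ↓reduceIte, sub_zero, φ, C]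
    field_simp
    linarith
  have hcont : Continuous (evenCutoff ρ φ) := continuous_evenCutoff hφ (by simp [φ])
  refine ⟨hcont, hcont.memLp_of_hasCompactSupport hasCompactSupport_evenCutoff,
    oddCutoff ρ φ₁, evenCutoff ρ φ₂,
    fun x h => (ne_zero_and_abs_ne_of_notMem h).elim
      (hasDerivAt_evenCutoff · · (hasDerivAt_mul_one_sub_cos ..)),
    fun x h => (ne_zero_and_abs_ne_of_notMem h).elim
      (hasDerivAt_oddCutoff · · (hasDerivAt_neg_mul_sin ..)),
    fun x _ => ?_, φ₁ 0, -φ₁ 0,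
    tendsto_oddCutoff_nhdsGT hρ (by fun_prop),
    tendsto_oddCutoff_nhdsLT hρ (by fun_prop), ?_⟩
  · rw [hu0]
    simp only [evenCutoff, φ, φ₂, C]
    split_ifs
    · field_simp; ring
    · ring
  · rw [hu0, integral_evenCutoff hρ.le (hφ.intervalIntegrable _ _),
      integral_mul_one_sub_cos _ _ hk₀, ha]
    simp only [φ₁, C, sub_zero]
    rw [mul_assoc 2 k₀ ρ, sin_two_mul]
    field_simp
    linear_combination (2 * Z * sin (k₀ * ρ)) * hchar
end

section
/- Let q(x) = c e^{−μ|x|} with μ > 0, c ∈ ℂ, and λ = k² with Im k ≥ 0, λ ≠ −μ². The function u_λ(x) = (1 − c/(μ²+λ))e^{ik|x|} + q(x)/(μ²+λ) satisfies −u_λ'' − λ u_λ + u_λ(0) q = 0 for x ≠ 0 (where u_λ(0) = 1). In particular, u_λ ∈ L²(ℝ) for real k ≠ 0 if and only if c = μ² + λ, in which case λ = c − μ² and u_λ(x) = e^{−μ|x|}. -/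
/-!
Away from `0`, `e^{a|x|}` is a smooth exponential with `(e^{a|x|})'' = a² e^{a|x|}`, so
`-u'' - k² u = -(μ² + k²) B e^{-μ|x|}` with `B = c/(μ² + k²)`, which is `-q` because `u(0) = 1`.
For real `k` the term `(1 - B) e^{ik|x|}` has constant modulus `|1 - B|`, hence lies in `L²(ℝ)`
only when it vanishes, whereas `e^{-μ|x|}` is always square integrable.
-/

open MeasureTheory Filter Set Complex

noncomputable def expAbs (a : ℂ) (x : ℝ) : ℂ := cexp (a * |x|)

lemma expAbs_zero (a : ℂ) : expAbs a 0 = 1 := by simp [expAbs]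

lemma hasDerivAt_expAbs (a : ℂ) {x : ℝ} (hx : x ≠ 0) :
    HasDerivAt (expAbs a) (a * (SignType.sign x : ℝ) * expAbs a x) x :=
  (((hasDerivAt_abs hx).ofReal_comp).const_mul a).cexp.congr_deriv (by rw [expAbs]; ring)

lemma hasDerivAt_sign_of_ne_zero {x : ℝ} (hx : x ≠ 0) :
    HasDerivAt (fun y : ℝ => ((SignType.sign y : ℝ) : ℂ)) 0 x := by
  rcases hx.lt_or_gt with hx | hx
  · exact (hasDerivAt_const x (-1 : ℂ)).congr_of_eventuallyEq <|
      eventually_of_mem (Iio_mem_nhds hx) fun y hy => by simp [sign_neg (mem_Iio.1 hy)]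
  · exact (hasDerivAt_const x (1 : ℂ)).congr_of_eventuallyEq <|
      eventually_of_mem (Ioi_mem_nhds hx) fun y hy => by simp [sign_pos (mem_Ioi.1 hy)]

lemma hasDerivAt_sign_mul_expAbs (a : ℂ) {x : ℝ} (hx : x ≠ 0) :
    HasDerivAt (fun y => a * (SignType.sign y : ℝ) * expAbs a y) (a ^ 2 * expAbs a x) x := by
  have hs : ((SignType.sign x : ℝ) : ℂ) ^ 2 = 1 := by
    rcases hx.lt_or_gt with hx | hx <;> simp [hx]
  exact (((hasDerivAt_sign_of_ne_zero hx).const_mul a).mul (hasDerivAt_expAbs a hx)).congr_deriv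
    (by linear_combination (a ^ 2 * expAbs a x) * hs)

lemma continuous_expAbs (a : ℂ) : Continuous (expAbs a) := by
  unfold expAbs; fun_prop

lemma integrable_expAbs {a : ℂ} (ha : a.re < 0) : Integrable (expAbs a) := by
  have hneg : IntegrableOn (expAbs a) (Iic 0) :=
    (integrableOn_exp_mul_complex_Iic (a := -a) (by simpa using ha) 0).congr_fun
      (fun x hx => by simp [expAbs, abs_of_nonpos (mem_Iic.1 hx)]) measurableSet_Iic
  have hpos : IntegrableOn (expAbs a) (Ioi 0) :=
    (integrableOn_exp_mul_complex_Ioi ha 0).congr_fun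
      (fun x hx => by simp [expAbs, abs_of_pos (mem_Ioi.1 hx)]) measurableSet_Ioi
  simpa [Iic_union_Ioi, integrableOn_univ] using hneg.union hpos

lemma memLp_expAbs {a : ℂ} (ha : a.re < 0) : MemLp (expAbs a) 2 := by
  refine (memLp_two_iff_integrable_sq_norm (continuous_expAbs a).aestronglyMeasurable).2 ?_
  refine (integrable_expAbs (a := 2 * a) (by simp; linarith)).norm.congr (ae_of_all _ fun x => ?_)
  simp only [expAbs, ← norm_pow, ← Complex.exp_nat_mul]
  push_cast; ring_nf

lemma norm_expAbs_I_mul_ofReal (k x : ℝ) : ‖expAbs (I * k) x‖ = 1 := by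
  rw [expAbs, mul_assoc, ← ofReal_mul, norm_exp_I_mul_ofReal]

lemma eq_zero_of_memLp_of_forall_norm_eq {α E : Type*} [MeasurableSpace α] {μ : Measure α}
    [NormedAddCommGroup E] {p : ENNReal} (hp₀ : p ≠ 0) (hp : p ≠ ⊤) (hμ : μ univ = ⊤)
    {f : α → E} (hf : MemLp f p μ) {C : ℝ} (hC : ∀ x, ‖f x‖ = C) : C = 0 := by
  have h : MemLp (fun _ : α => C) p μ := by simpa only [hC] using hf.norm
  simpa [hμ] using (memLp_const_iff hp₀ hp).1 h

lemma memLp_two_mul_expAbs_I_mul_add_iff {b : ℂ} (r : ℝ) (hb : MemLp (expAbs b) 2)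
    {A B : ℂ} : MemLp (fun x => A * expAbs (I * r) x + B * expAbs b x) 2 ↔ A = 0 := by
  refine ⟨fun hu => ?_, fun hA => by simpa [hA] using hb.const_mul B⟩
  have hE : MemLp (fun x => A * expAbs (I * r) x) 2 := by
    convert hu.sub (hb.const_mul B) using 1
    ext x; simp
  exact norm_eq_zero.1 <| eq_zero_of_memLp_of_forall_norm_eq two_ne_zero ENNReal.ofNat_ne_top
    Real.volume_univ hE fun x => by rw [norm_mul, norm_expAbs_I_mul_ofReal, mul_one]

theorem stmt17_general (μ : ℝ) (hμ : 0 < μ) (c k : ℂ)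
    (hlam : k ^ 2 ≠ -(μ : ℂ) ^ 2)
    (q : ℝ → ℂ) (hq : ∀ x : ℝ, q x = c * Complex.exp (-(μ : ℂ) * |x|))
    (u : ℝ → ℂ)
    (hu : ∀ x : ℝ, u x = (1 - c / ((μ : ℂ) ^ 2 + k ^ 2)) * Complex.exp (Complex.I * k * |x|)
            + q x / ((μ : ℂ) ^ 2 + k ^ 2)) :
    u 0 = 1 ∧
    (∃ u' u'' : ℝ → ℂ,
      (∀ x : ℝ, x ≠ 0 → HasDerivAt u (u' x) x) ∧
      (∀ x : ℝ, x ≠ 0 → HasDerivAt u' (u'' x) x) ∧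
      (∀ x : ℝ, x ≠ 0 → -u'' x - k ^ 2 * u x + u 0 * q x = 0)) ∧
    (k.im = 0 → k ≠ 0 →
      ((MemLp u 2 (volume : Measure ℝ) ↔ c = (μ : ℂ) ^ 2 + k ^ 2) ∧
       (c = (μ : ℂ) ^ 2 + k ^ 2 → ∀ x : ℝ, u x = Complex.exp (-(μ : ℂ) * |x|)))) := by
  have hD : (μ : ℂ) ^ 2 + k ^ 2 ≠ 0 := fun h => hlam (by linear_combination h)
  set B := c / ((μ : ℂ) ^ 2 + k ^ 2)
  have hq' : q = fun x => c * expAbs (-μ) x := funext hq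
  have hu' : u = fun x => (1 - B) * expAbs (I * k) x + B * expAbs (-μ) x := by
    ext x; rw [hu, hq]; simp only [expAbs]; ring
  subst hq' hu'
  clear hq hu
  have hu0 : (1 - B) * expAbs (I * k) 0 + B * expAbs (-μ) 0 = 1 := by simp [expAbs_zero]
  refine ⟨hu0, ⟨fun x => (1 - B) * (I * k * (SignType.sign x : ℝ) * expAbs (I * k) x)
      + B * (-μ * (SignType.sign x : ℝ) * expAbs (-μ) x),
    fun x => (1 - B) * ((I * k) ^ 2 * expAbs (I * k) x) + B * ((-μ) ^ 2 * expAbs (-μ) x),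
    fun x hx => ((hasDerivAt_expAbs _ hx).const_mul _).add ((hasDerivAt_expAbs _ hx).const_mul _),
    fun x hx => ((hasDerivAt_sign_mul_expAbs _ hx).const_mul _).add
      ((hasDerivAt_sign_mul_expAbs _ hx).const_mul _),
    fun x _ => ?_⟩, fun him _ => ?_⟩
  · beta_reduce
    rw [hu0]
    linear_combination (-expAbs (-μ) x) * div_mul_cancel₀ c hD
      - (1 - B) * k ^ 2 * expAbs (I * k) x * I_sq
  · obtain ⟨r, rfl⟩ : ∃ r : ℝ, k = r := ⟨k.re, Complex.ext rfl him⟩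
    have hF : MemLp (expAbs (-μ)) 2 := memLp_expAbs (by simpa using hμ)
    rw [show c = (μ : ℂ) ^ 2 + r ^ 2 ↔ B = 1 from (div_eq_one_iff_eq hD).symm]
    refine ⟨⟨fun hu => ?_, fun hB1 => ?_⟩, fun hB1 x => by simp [hB1, expAbs]⟩
    · exact (sub_eq_zero.1 ((memLp_two_mul_expAbs_I_mul_add_iff r hF).1 hu)).symm
    · simpa [hB1] using hF

/-- for `q(x) = c e^{-μ|x|}` (`μ > 0`), `λ = k²` with `Im k ≥ 0`, `λ ≠ -μ²`,
the function `u_λ(x) = (1 - c/(μ²+λ)) e^{ik|x|} + q(x)/(μ²+λ)` satisfies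
`-u'' - λ u + u(0) q = 0` off `0` (with `u(0) = 1`); and for real `k ≠ 0`,
`u_λ ∈ L²(ℝ)` iff `c = μ² + λ`, in which case `u_λ(x) = e^{-μ|x|}`. -/
theorem stmt17 (μ : ℝ) (hμ : 0 < μ) (c k : ℂ) (hkim : 0 ≤ k.im)
    (hlam : k ^ 2 ≠ -(μ : ℂ) ^ 2)
    (q : ℝ → ℂ) (hq : ∀ x : ℝ, q x = c * Complex.exp (-(μ : ℂ) * |x|))
    (u : ℝ → ℂ)
    (hu : ∀ x : ℝ, u x = (1 - c / ((μ : ℂ) ^ 2 + k ^ 2)) * Complex.exp (Complex.I * k * |x|)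
            + q x / ((μ : ℂ) ^ 2 + k ^ 2)) :
    u 0 = 1 ∧
    (∃ u' u'' : ℝ → ℂ,
      (∀ x : ℝ, x ≠ 0 → HasDerivAt u (u' x) x) ∧
      (∀ x : ℝ, x ≠ 0 → HasDerivAt u' (u'' x) x) ∧
      (∀ x : ℝ, x ≠ 0 → -u'' x - k ^ 2 * u x + u 0 * q x = 0)) ∧
    (k.im = 0 → k ≠ 0 →
      ((MemLp u 2 (volume : Measure ℝ) ↔ c = (μ : ℂ) ^ 2 + k ^ 2) ∧
       (c = (μ : ℂ) ^ 2 + k ^ 2 → ∀ x : ℝ, u x = Complex.exp (-(μ : ℂ) * |x|)))) :=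
  stmt17_general μ hμ c k hlam q hq u hu
end
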